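/- Let A, B be closed discrete subsets of R^d and A' ⊆ A, B' ⊆ B closed discrete subsets with A∖A' and B∖B' infinite. If the kernel of F_{A',B'} : S(R^d) → S(A') ⊕ S(B'), f ↦ (f|_{A'}, f̂|_{B'}), is finite-dimensional, then the cokernel of F_{A,B} : S(R^d) → S(A) ⊕ S(B) is infinite-dimensional. -/

import Mathlib

open MeasureTheory

noncomputable def jb {d : ℕ} (x : EuclideanSpace ℝ (Fin d)) : ℝ := Real.sqrt (1 + ‖x‖ ^ 2)

/-- A sequence on `A` is rapidly decreasing if `|α(a)| ⟨a⟩^N` is bounded for every `N`. -/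
def IsRapid {d : ℕ} {A : Set (EuclideanSpace ℝ (Fin d))} (α : A → ℂ) : Prop :=
  ∀ N : ℕ, ∃ C : ℝ, ∀ a : A, ‖α a‖ * jb (a : EuclideanSpace ℝ (Fin d)) ^ N ≤ C

/-- The map `F_{A,B} f = (f|_A, f̂|_B)`. -/
noncomputable def restrMap {d : ℕ} (A B : Set (EuclideanSpace ℝ (Fin d)))
    (f : SchwartzMap (EuclideanSpace ℝ (Fin d)) ℂ) : (A → ℂ) × (B → ℂ) :=
  (fun a => f a, fun b => FourierTransform.fourier (⇑f) b)

/-- `F_{A,B}` has finite-dimensional cokernel: finitely many rapidly decreasing pairs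
span `𝓢(A) ⊕ 𝓢(B)` together with the image of `F_{A,B}`. -/
def CokerFinDim {d : ℕ} (A B : Set (EuclideanSpace ℝ (Fin d))) : Prop :=
  ∃ (n : ℕ) (v : Fin n → ((A → ℂ) × (B → ℂ))),
    (∀ i, IsRapid (v i).1 ∧ IsRapid (v i).2) ∧
    ∀ αβ : (A → ℂ) × (B → ℂ), IsRapid αβ.1 → IsRapid αβ.2 →
      ∃ (f : SchwartzMap (EuclideanSpace ℝ (Fin d)) ℂ) (c : Fin n → ℂ),
        αβ = restrMap A B f + ∑ i, c i • v i

/-! Suppose `n` rapidly decreasing pairs span the cokernel of `F_{A,B}` and the kernel of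
`F_{A',B'}` is spanned by `m` functions. Take the point masses `(𝟙_{x}, 0)` at `n + m + 1`
points `x ∈ A ∖ A'` and let `U` be their span. Modulo the image of `F_{A,B}`, `U` has dimension
at most `n`; and every `f` with `F_{A,B} f ∈ U` vanishes on `A'` with `f̂` vanishing on `B'`, so
`U ∩ im F_{A,B}` lies in the image of the `m`-dimensional kernel of `F_{A',B'}`. Hence
`n + m + 1 ≤ n + m`. -/

open Module Submodule

theorem LinearMap.finrank_le_of_le_range_sup_of_comap_le {K V W : Type*} [DivisionRing K]
    [AddCommGroup V] [Module K V] [AddCommGroup W] [Module K W] (F : V →ₗ[K] W)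
    {U S : Submodule K W} {T : Submodule K V} [FiniteDimensional K U] [FiniteDimensional K S]
    [FiniteDimensional K T] (hU : U ≤ range F ⊔ S) (hT : U.comap F ≤ T) :
    finrank K U ≤ finrank K S + finrank K T := by
  set q := (range F).mkQ.domRestrict U
  have hrange : finrank K (range q) ≤ finrank K S := calc
    finrank K (range q) ≤ finrank K (S.map (range F).mkQ) := by
      refine finrank_mono ?_
      rw [LinearMap.range_domRestrict]
      calc U.map (range F).mkQ ≤ (range F ⊔ S).map (range F).mkQ := map_mono hU
        _ = S.map (range F).mkQ := by simp [Submodule.map_sup]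
    _ ≤ finrank K S := finrank_map_le _ _
  have hker : finrank K (ker q) ≤ finrank K T := calc
    finrank K (ker q) = finrank K ((ker q).map U.subtype) := (finrank_map_subtype_eq _ _).symm
    _ ≤ finrank K (T.map F) := by
      refine finrank_mono ?_
      rintro _ ⟨u, hu, rfl⟩
      obtain ⟨v, hv⟩ : (u : W) ∈ range F := by simpa [q] using hu
      exact ⟨v, hT (by simp [hv]), hv⟩
    _ ≤ finrank K T := finrank_map_le _ _
  have := q.finrank_range_add_finrank_ker
  omega

section

variable {d : ℕ} {A B : Set (EuclideanSpace ℝ (Fin d))}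

variable (A B) in
theorem restrMap_eq (f : SchwartzMap (EuclideanSpace ℝ (Fin d)) ℂ) :
    restrMap A B f =
      (fun a : A => f a, fun b : B => FourierTransform.fourier f (b : EuclideanSpace ℝ (Fin d))) :=
  rfl

variable (A B) in
noncomputable def restrMapₗ : SchwartzMap (EuclideanSpace ℝ (Fin d)) ℂ →ₗ[ℂ] (A → ℂ) × (B → ℂ) where
  toFun := restrMap A B
  map_add' f g := by ext <;> simp [restrMap_eq]
  map_smul' c f := by ext <;> simp [restrMap_eq]

theorem isRapid_zero : IsRapid (0 : A → ℂ) :=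
  fun _ => ⟨0, fun _ => by simp⟩

theorem isRapid_single (x : A) (c : ℂ) : IsRapid (Pi.single x c) := by
  intro N
  refine ⟨‖c‖ * jb (x : EuclideanSpace ℝ (Fin d)) ^ N, fun a => ?_⟩
  rcases eq_or_ne a x with rfl | hax
  · simp
  · simp only [Pi.single_apply, hax, if_false, norm_zero, zero_mul]
    exact mul_nonneg (norm_nonneg c) (pow_nonneg (Real.sqrt_nonneg _) N)

theorem mem_range_sup_span_of_isRapid {n : ℕ} {v : Fin n → (A → ℂ) × (B → ℂ)}
    (hspan : ∀ αβ : (A → ℂ) × (B → ℂ), IsRapid αβ.1 → IsRapid αβ.2 →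
      ∃ (f : SchwartzMap (EuclideanSpace ℝ (Fin d)) ℂ) (c : Fin n → ℂ),
        αβ = restrMap A B f + ∑ i, c i • v i)
    {αβ : (A → ℂ) × (B → ℂ)} (hα : IsRapid αβ.1) (hβ : IsRapid αβ.2) :
    αβ ∈ LinearMap.range (restrMapₗ A B) ⊔ span ℂ (Set.range v) := by
  obtain ⟨f, c, rfl⟩ := hspan αβ hα hβ
  exact add_mem (mem_sup_left ⟨f, rfl⟩)
    (mem_sup_right (sum_mem fun i _ => smul_mem _ _ (subset_span ⟨i, rfl⟩)))

variable (A B) in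
def vanishingOn (A' B' : Set (EuclideanSpace ℝ (Fin d))) : Submodule ℂ ((A → ℂ) × (B → ℂ)) where
  carrier := {p | (∀ a : A, (a : EuclideanSpace ℝ (Fin d)) ∈ A' → p.1 a = 0) ∧
    ∀ b : B, (b : EuclideanSpace ℝ (Fin d)) ∈ B' → p.2 b = 0}
  add_mem' hp hq := ⟨fun a ha => by simp [hp.1 a ha, hq.1 a ha],
    fun b hb => by simp [hp.2 b hb, hq.2 b hb]⟩
  zero_mem' := ⟨fun _ _ => rfl, fun _ _ => rfl⟩
  smul_mem' c p hp := ⟨fun a ha => by simp [hp.1 a ha], fun b hb => by simp [hp.2 b hb]⟩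

theorem inl_single_mem_vanishingOn {A' : Set (EuclideanSpace ℝ (Fin d))}
    (B' : Set (EuclideanSpace ℝ (Fin d))) {x : A} (hx : (x : EuclideanSpace ℝ (Fin d)) ∉ A') :
    LinearMap.inl ℂ (A → ℂ) (B → ℂ) (Pi.single x 1) ∈ vanishingOn A B A' B' := by
  refine ⟨fun a ha => ?_, fun _ _ => rfl⟩
  have hax : a ≠ x := by rintro rfl; exact hx ha
  simp [hax]

variable (A B) in
theorem linearIndependent_inl_single :
    LinearIndependent ℂ fun x : A => LinearMap.inl ℂ (A → ℂ) (B → ℂ) (Pi.single x 1) :=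
  (Pi.linearIndependent_single_one A ℂ).map' _ Submodule.ker_inl

end

theorem coker_infinite_of_subset_ker_findim_general (d : ℕ)
    (A B A' B' : Set (EuclideanSpace ℝ (Fin d)))
    (hAA : A' ⊆ A) (hBB : B' ⊆ B)
    (hAinf : (A \ A').Infinite)
    (hker : ∃ (n : ℕ) (g : Fin n → SchwartzMap (EuclideanSpace ℝ (Fin d)) ℂ),
      ∀ f : SchwartzMap (EuclideanSpace ℝ (Fin d)) ℂ,
        (∀ a ∈ A', f a = 0) → (∀ b ∈ B', FourierTransform.fourier (⇑f) b = 0) →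
        f ∈ Submodule.span ℂ (Set.range g)) :
    ¬ CokerFinDim A B := by
  rintro ⟨n, v, -, hspan⟩
  obtain ⟨m, g, hg⟩ := hker
  have hAinf' : {x : A | (x : EuclideanSpace ℝ (Fin d)) ∉ A'}.Infinite :=
    .of_image Subtype.val (by convert hAinf using 1; ext; simp [and_comm])
  obtain ⟨s, hsA', hs⟩ := hAinf'.exists_subset_card_eq (n + m + 1)
  set δ : s → (A → ℂ) × (B → ℂ) := fun x => LinearMap.inl ℂ _ _ (Pi.single (x : A) 1)
  have hδ_sup : span ℂ (Set.range δ) ≤ LinearMap.range (restrMapₗ A B) ⊔ span ℂ (Set.range v) :=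
    span_le.2 <| by
      rintro _ ⟨x, rfl⟩
      exact mem_range_sup_span_of_isRapid hspan (isRapid_single (x : A) 1) isRapid_zero
  have hδ_vanish : span ℂ (Set.range δ) ≤ vanishingOn A B A' B' :=
    span_le.2 <| by rintro _ ⟨x, rfl⟩; exact inl_single_mem_vanishingOn B' (hsA' x.2)
  have hkernel : (span ℂ (Set.range δ)).comap (restrMapₗ A B) ≤ span ℂ (Set.range g) :=
    fun f hf => hg f (fun a ha => (hδ_vanish hf).1 ⟨a, hAA ha⟩ ha)
      (fun b hb => (hδ_vanish hf).2 ⟨b, hBB hb⟩ hb)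
  have hδ_indep : LinearIndependent ℂ δ :=
    (linearIndependent_inl_single A B).comp _ Subtype.val_injective
  have := FiniteDimensional.span_of_finite ℂ (Set.finite_range δ)
  have := FiniteDimensional.span_of_finite ℂ (Set.finite_range v)
  have := FiniteDimensional.span_of_finite ℂ (Set.finite_range g)
  have hcount := (restrMapₗ A B).finrank_le_of_le_range_sup_of_comap_le hδ_sup hkernel
  rw [finrank_span_eq_card hδ_indep, Fintype.card_coe, hs] at hcount
  have hv_dim : finrank ℂ (span ℂ (Set.range v)) ≤ n :=
    (finrank_range_le_card v).trans_eq (Fintype.card_fin n)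
  have hg_dim : finrank ℂ (span ℂ (Set.range g)) ≤ m :=
    (finrank_range_le_card g).trans_eq (Fintype.card_fin m)
  omega

/-- If `A' ⊆ A`, `B' ⊆ B` are closed discrete subsets with `A∖A'`, `B∖B'` infinite and
`Ker F_{A',B'}` is finite-dimensional, then `Coker F_{A,B}` is infinite-dimensional. -/
theorem coker_infinite_of_subset_ker_findim (d : ℕ)
    (A B A' B' : Set (EuclideanSpace ℝ (Fin d)))
    (hA : IsClosed A) (hB : IsClosed B) (hA' : IsClosed A') (hB' : IsClosed B')
    (hAd : DiscreteTopology A) (hBd : DiscreteTopology B)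
    (hA'd : DiscreteTopology A') (hB'd : DiscreteTopology B')
    (hAA : A' ⊆ A) (hBB : B' ⊆ B)
    (hAinf : (A \ A').Infinite) (hBinf : (B \ B').Infinite)
    (hker : ∃ (n : ℕ) (g : Fin n → SchwartzMap (EuclideanSpace ℝ (Fin d)) ℂ),
      ∀ f : SchwartzMap (EuclideanSpace ℝ (Fin d)) ℂ,
        (∀ a ∈ A', f a = 0) → (∀ b ∈ B', FourierTransform.fourier (⇑f) b = 0) →
        f ∈ Submodule.span ℂ (Set.range g)) :
    ¬ CokerFinDim A B :=
  coker_infinite_of_subset_ker_findim_general d A B A' B' hAA hBB hAinf hker
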